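/- Let y be a nonnegative, nondecreasing function on [0, T], let C, ξ > 0 and η ≥ 0 be constants with y(T) ≤ η, and let h : [0,T] → ℝ be differentiable with h(0) = 0 and |h'(t)| ≤ C e^{-ξ t} y(t)(|h(t)| + y(t)) for all 0 ≤ t ≤ T. Then for all 0 ≤ t ≤ T, |h(t)| ≤ (e^{Cη/ξ} - 1) y(t) and |h'(t)| ≤ C e^{Cη/ξ} e^{-ξ t} y(t)². -/

import Mathlib

/-!
Fix `t` and put `M = y t`. On `[0, t]` monotonicity of `y` turns the hypothesis into the linear
differential inequality `|h'| ≤ k (|h| + M)` with rate `k s = C M e^{-ξ s}`, whose comparison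
solution is `(e^{K s} - 1) M` for the antiderivative `K s = C M (1 - e^{-ξ s}) / ξ ≤ C η / ξ`.
This gives the bound on `|h t|`; feeding it back into the hypothesis gives the bound on `|h' t|`.
-/

open Real Set Filter Topology

section Gronwall

variable {E : Type*} [NormedAddCommGroup E] [NormedSpace ℝ E] {f f' : ℝ → E} {k K : ℝ → ℝ}
  {a b M : ℝ}

/-- The comparison function `B = (M + ε) e^{K - K a + ε (· - a)} - M` solves `B' = (k + ε) (B + M)`,
which is strictly above `k (B + M)`, so the strict fencing theorem applies. -/
theorem norm_le_of_norm_deriv_le_mul_norm_add_of_pos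
    (hf : ContinuousOn f (Icc a b)) (hf' : ∀ x ∈ Ico a b, HasDerivWithinAt f (f' x) (Ici x) x)
    (hK : ∀ x, HasDerivAt K (k x) x) (hM : 0 ≤ M) (ha : f a = 0)
    (bound : ∀ x ∈ Ico a b, ‖f' x‖ ≤ k x * (‖f x‖ + M)) {ε : ℝ} (hε : 0 < ε) :
    ∀ x ∈ Icc a b, ‖f x‖ ≤ (M + ε) * exp (K x - K a + ε * (x - a)) - M := by
  have hB : ∀ x, HasDerivAt (fun s => (M + ε) * exp (K s - K a + ε * (s - a)) - M)
      ((k x + ε) * ((M + ε) * exp (K x - K a + ε * (x - a)))) x := by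
    intro x
    have hexponent : HasDerivAt (fun s => K s - K a + ε * (s - a)) (k x + ε) x :=
      (((hK x).sub_const (K a)).add (((hasDerivAt_id' x).sub_const a).const_mul ε)).congr_deriv
        (by ring)
    exact ((hexponent.exp.const_mul (M + ε)).sub_const M).congr_deriv (by ring)
  refine fun x hx => image_norm_le_of_norm_deriv_right_lt_deriv_boundary hf hf' ?_ hB ?_ hx
  · simp [ha, hε.le]
  · intro s hs hfs
    have hpos : 0 < (M + ε) * exp (K s - K a + ε * (s - a)) := by positivity
    calc ‖f' s‖ ≤ k s * (‖f s‖ + M) := bound s hs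
      _ = k s * ((M + ε) * exp (K s - K a + ε * (s - a))) := by rw [hfs]; ring
      _ < (k s + ε) * ((M + ε) * exp (K s - K a + ε * (s - a))) := by nlinarith

theorem norm_le_of_norm_deriv_le_mul_norm_add
    (hf : ContinuousOn f (Icc a b)) (hf' : ∀ x ∈ Ico a b, HasDerivWithinAt f (f' x) (Ici x) x)
    (hK : ∀ x, HasDerivAt K (k x) x) (hM : 0 ≤ M) (ha : f a = 0)
    (bound : ∀ x ∈ Ico a b, ‖f' x‖ ≤ k x * (‖f x‖ + M)) :
    ∀ x ∈ Icc a b, ‖f x‖ ≤ (exp (K x - K a) - 1) * M := by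
  intro x hx
  have hlim : Tendsto (fun ε => (M + ε) * exp (K x - K a + ε * (x - a)) - M) (𝓝[>] 0)
      (𝓝 ((exp (K x - K a) - 1) * M)) := by
    have hcont : Continuous (fun ε => (M + ε) * exp (K x - K a + ε * (x - a)) - M) := by
      fun_prop
    convert hcont.continuousWithinAt.tendsto using 2
    simp only [add_zero, zero_mul]
    ring
  refine ge_of_tendsto hlim (eventually_nhdsWithin_of_forall fun ε hε => ?_)
  exact norm_le_of_norm_deriv_le_mul_norm_add_of_pos hf hf' hK hM ha bound hε x hx

end Gronwall

theorem hasDerivAt_neg_div_mul_exp_neg_mul (c : ℝ) {ξ : ℝ} (hξ : ξ ≠ 0) (x : ℝ) :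
    HasDerivAt (fun s => -(c / ξ) * exp (-ξ * s)) (c * exp (-ξ * x)) x :=
  (((hasDerivAt_id' x).const_mul (-ξ)).exp.const_mul (-(c / ξ))).congr_deriv (by field_simp)

theorem stmt_3_general (T C ξ η : ℝ) (hC : 0 < C) (hξ : 0 < ξ)
    (y : ℝ → ℝ) (hy0 : ∀ t ∈ Set.Icc 0 T, 0 ≤ y t)
    (hymono : ∀ s ∈ Set.Icc 0 T, ∀ t ∈ Set.Icc 0 T, s ≤ t → y s ≤ y t)
    (hyT : y T ≤ η)
    (h : ℝ → ℝ) (hdiff : Differentiable ℝ h) (h0 : h 0 = 0)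
    (hineq : ∀ t ∈ Set.Icc 0 T,
      |deriv h t| ≤ C * Real.exp (-ξ * t) * y t * (|h t| + y t)) :
    ∀ t ∈ Set.Icc 0 T,
      |h t| ≤ (Real.exp (C * η / ξ) - 1) * y t ∧
      |deriv h t| ≤ C * Real.exp (C * η / ξ) * Real.exp (-ξ * t) * (y t) ^ 2 := by
  intro t ht
  have hyt : 0 ≤ y t := hy0 t ht
  have hytη : y t ≤ η := (hymono t ht T ⟨ht.1.trans ht.2, le_rfl⟩ ht.2).trans hyT
  have hbound : ∀ s ∈ Ico 0 t, ‖deriv h s‖ ≤ C * y t * exp (-ξ * s) * (‖h s‖ + y t) := by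
    intro s hs
    have hsT : s ∈ Icc 0 T := ⟨hs.1, hs.2.le.trans ht.2⟩
    have hys := hymono s hsT t ht hs.2.le
    have hys0 := hy0 s hsT
    calc ‖deriv h s‖ ≤ C * exp (-ξ * s) * y s * (|h s| + y s) := hineq s hsT
      _ ≤ C * exp (-ξ * s) * y t * (|h s| + y t) := by gcongr
      _ = C * y t * exp (-ξ * s) * (‖h s‖ + y t) := by rw [norm_eq_abs]; ring
  have habs : |h t| ≤ (exp (C * η / ξ) - 1) * y t := by
    refine (norm_le_of_norm_deriv_le_mul_norm_add hdiff.continuous.continuousOn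
      (fun s _ => (hdiff s).hasDerivAt.hasDerivWithinAt)
      (hasDerivAt_neg_div_mul_exp_neg_mul (C * y t) hξ.ne') hyt h0 hbound t
      ⟨ht.1, le_rfl⟩).trans (mul_le_mul_of_nonneg_right ?_ hyt)
    have hcoef : C * y t / ξ ≤ C * η / ξ := by gcongr
    have hdecay : 0 ≤ C * y t / ξ * exp (-ξ * t) := by positivity
    simp only [mul_zero, exp_zero, sub_le_sub_iff_right, exp_le_exp]
    linarith
  refine ⟨habs, (hineq t ht).trans ?_⟩
  calc C * exp (-ξ * t) * y t * (|h t| + y t)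
      ≤ C * exp (-ξ * t) * y t * ((exp (C * η / ξ) - 1) * y t + y t) := by gcongr
    _ = C * exp (C * η / ξ) * exp (-ξ * t) * y t ^ 2 := by ring

/-- Estimates on the modulation parameter h from the differential
inequality |h'(t)| ≤ C e^{-ξt} y(t)(|h(t)| + y(t)). -/
theorem stmt_3 (T C ξ η : ℝ) (hT : 0 < T) (hC : 0 < C) (hξ : 0 < ξ) (hη : 0 ≤ η)
    (y : ℝ → ℝ) (hy0 : ∀ t ∈ Set.Icc 0 T, 0 ≤ y t)
    (hymono : ∀ s ∈ Set.Icc 0 T, ∀ t ∈ Set.Icc 0 T, s ≤ t → y s ≤ y t)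
    (hyT : y T ≤ η)
    (h : ℝ → ℝ) (hdiff : Differentiable ℝ h) (h0 : h 0 = 0)
    (hineq : ∀ t ∈ Set.Icc 0 T,
      |deriv h t| ≤ C * Real.exp (-ξ * t) * y t * (|h t| + y t)) :
    ∀ t ∈ Set.Icc 0 T,
      |h t| ≤ (Real.exp (C * η / ξ) - 1) * y t ∧
      |deriv h t| ≤ C * Real.exp (C * η / ξ) * Real.exp (-ξ * t) * (y t) ^ 2 :=
  stmt_3_general T C ξ η hC hξ y hy0 hymono hyT h hdiff h0 hineq
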